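/- Coherent-work additivity of the effective potential: if a unitary V on a bipartite system satisfies [V, H_S⊗1 + 1⊗H_A] = 0 and V(|ψ₀⟩⊗|0⟩) = |ψ₁⟩⊗|ω⟩ with |0⟩ an eigenstate of H_A of eigenvalue 0, then Λ(β,ψ₀) = Λ(β,ψ₁) + Λ(β,ω) for all β, where Λ(β,φ) := −log⟨φ|e^{−βH}|φ⟩ with H the Hamiltonian of the respective subsystem. -/

import Mathlib

/-!
Since `H_tot = H_S ⊗ 1 + 1 ⊗ H_A` is a sum of commuting terms,
`e^{-βH_tot} = e^{-βH_S} ⊗ e^{-βH_A}`, so its expectation in a product state factorizes.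
As `V` is unitary and commutes with `e^{-βH_tot}`, the expectations in `ψ₀ ⊗ 0` and in
`V(ψ₀ ⊗ 0) = ψ₁ ⊗ ω` agree, and the first equals `⟨ψ₀|e^{-βH_S}|ψ₀⟩` because `e^{-βH_A}`
fixes the zero-energy state. Both factors on the right are positive (`e^{-βH}` is positive
definite), so taking `-log` gives the additivity.
-/

open scoped Matrix BigOperators

/-- Matrix exponential as a power series. -/
noncomputable def mexp {ι : Type*} [Fintype ι] [DecidableEq ι] (M : Matrix ι ι ℂ) :
    Matrix ι ι ℂ :=
  ∑' k : ℕ, ((k.factorial : ℂ)⁻¹) • M ^ k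

/-- Quadratic form `⟨v, M v⟩`. -/
noncomputable def qform {ι : Type*} [Fintype ι] (M : Matrix ι ι ℂ) (v : ι → ℂ) : ℂ :=
  star v ⬝ᵥ M.mulVec v

/-- The effective potential `Λ(β, v) = −log ⟨v| e^{−βH} |v⟩` of a pure state `v`. -/
noncomputable def effPot {ι : Type*} [Fintype ι] [DecidableEq ι]
    (β : ℝ) (H : Matrix ι ι ℂ) (v : ι → ℂ) : ℝ :=
  -Real.log (qform (mexp ((-(β : ℂ)) • H)) v).re

open NormedSpace Matrix
open scoped Kronecker ComplexOrder

lemma mexp_eq_exp {ι : Type*} [Fintype ι] [DecidableEq ι] (M : Matrix ι ι ℂ) :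
    mexp M = exp M := by
  rw [exp_eq_tsum ℂ]; rfl

section Kronecker

variable (R ι κ : Type*) [CommRing R] [Fintype ι] [DecidableEq ι] [Fintype κ] [DecidableEq κ]

noncomputable def kroneckerOneAlgHom : Matrix ι ι R →ₐ[R] Matrix (ι × κ) (ι × κ) R where
  toFun A := A ⊗ₖ 1
  map_one' := one_kronecker_one
  map_mul' A B := by rw [← mul_kronecker_mul, one_mul]
  map_zero' := zero_kronecker _
  map_add' A B := add_kronecker A B 1
  commutes' r := by simp [Algebra.algebraMap_eq_smul_one, smul_kronecker]

noncomputable def oneKroneckerAlgHom : Matrix κ κ R →ₐ[R] Matrix (ι × κ) (ι × κ) R where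
  toFun B := 1 ⊗ₖ B
  map_one' := one_kronecker_one
  map_mul' A B := by rw [← mul_kronecker_mul, one_mul]
  map_zero' := kronecker_zero _
  map_add' A B := kronecker_add 1 A B
  commutes' r := by simp [Algebra.algebraMap_eq_smul_one, kronecker_smul]

end Kronecker

section Exp

variable {𝕜 ι κ : Type*} [RCLike 𝕜]
variable [Fintype ι] [DecidableEq ι] [Fintype κ] [DecidableEq κ]

theorem exp_mulVec_eq_self {M : Matrix ι ι 𝕜} {v : ι → 𝕜} (hv : M *ᵥ v = 0) :
    exp M *ᵥ v = v := by
  open scoped Norms.Operator in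
  have hsum := (exp_series_hasSum_exp' (𝕂 := 𝕜) M).map (mulVec.addMonoidHomLeft v)
    (continuous_id.matrix_mulVec continuous_const)
  refine hsum.unique ?_
  convert hasSum_ite_eq 0 v using 1
  funext n
  rcases n with _ | n
  · simp [mulVec.addMonoidHomLeft]
  · simp [mulVec.addMonoidHomLeft, smul_mulVec, pow_succ, ← mulVec_mulVec, hv]

theorem posDef_exp {A : Matrix ι ι 𝕜} (hA : A.IsHermitian) : (exp A).PosDef := by
  set B := exp ((2⁻¹ : ℝ) • A)
  have hB : Bᴴ = B := (hA.smul (IsSelfAdjoint.all _)).exp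
  have hsplit : exp A = Bᴴ * B := by
    rw [hB, ← exp_add_of_commute _ _ (Commute.refl _), ← add_smul]
    norm_num
  rw [hsplit]
  exact .conjTranspose_mul_self _ (mulVec_injective_of_isUnit (isUnit_exp _))

theorem exp_kronecker_one (A : Matrix ι ι 𝕜) :
    exp (A ⊗ₖ (1 : Matrix κ κ 𝕜)) = exp A ⊗ₖ 1 :=
  open scoped Norms.Operator in (map_exp (kroneckerOneAlgHom 𝕜 ι κ)
    (LinearMap.continuous_of_finiteDimensional (kroneckerOneAlgHom 𝕜 ι κ).toLinearMap) A).symm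

theorem exp_one_kronecker (B : Matrix κ κ 𝕜) :
    exp ((1 : Matrix ι ι 𝕜) ⊗ₖ B) = 1 ⊗ₖ exp B :=
  open scoped Norms.Operator in (map_exp (oneKroneckerAlgHom 𝕜 ι κ)
    (LinearMap.continuous_of_finiteDimensional (oneKroneckerAlgHom 𝕜 ι κ).toLinearMap) B).symm

theorem exp_kronecker_one_add_one_kronecker (A : Matrix ι ι 𝕜) (B : Matrix κ κ 𝕜) :
    exp (A ⊗ₖ 1 + 1 ⊗ₖ B) = exp A ⊗ₖ exp B := by
  have hAB : Commute (A ⊗ₖ (1 : Matrix κ κ 𝕜)) ((1 : Matrix ι ι 𝕜) ⊗ₖ B) := by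
    simp [Commute, SemiconjBy, ← mul_kronecker_mul]
  rw [exp_add_of_commute _ _ hAB, exp_kronecker_one, exp_one_kronecker, ← mul_kronecker_mul,
    mul_one, one_mul]

end Exp

section VecKronecker

variable {R ι κ : Type*}

def vecKronecker [Mul R] (u : ι → R) (v : κ → R) : ι × κ → R := fun x => u x.1 * v x.2

theorem kronecker_mulVec_vecKronecker [Fintype ι] [Fintype κ] [CommSemiring R]
    (A : Matrix ι ι R) (B : Matrix κ κ R) (u : ι → R) (v : κ → R) :
    (A ⊗ₖ B) *ᵥ vecKronecker u v = vecKronecker (A *ᵥ u) (B *ᵥ v) := by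
  ext ⟨i, k⟩
  simp only [mulVec, dotProduct, vecKronecker, kronecker_apply, Fintype.sum_prod_type,
    Finset.sum_mul_sum]
  exact Finset.sum_congr rfl fun j _ => Finset.sum_congr rfl fun l _ => by ring

theorem star_vecKronecker [CommSemiring R] [StarRing R] (u : ι → R) (v : κ → R) :
    star (vecKronecker u v) = vecKronecker (star u) (star v) := by
  ext x
  simp [vecKronecker]

theorem vecKronecker_dotProduct_vecKronecker [Fintype ι] [Fintype κ] [CommSemiring R]
    (u p : ι → R) (v q : κ → R) :
    vecKronecker u v ⬝ᵥ vecKronecker p q = (u ⬝ᵥ p) * (v ⬝ᵥ q) := by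
  simp only [dotProduct, vecKronecker, Fintype.sum_prod_type, Finset.sum_mul_sum]
  exact Finset.sum_congr rfl fun j _ => Finset.sum_congr rfl fun l _ => by ring

end VecKronecker

section Qform

variable {ι κ : Type*} [Fintype ι] [Fintype κ]

theorem star_dotProduct_self_eq_one {v : ι → ℂ} (hv : ∑ i, ‖v i‖ ^ 2 = 1) :
    star v ⬝ᵥ v = 1 := by
  simp only [dotProduct, Pi.star_apply, RCLike.star_def, Complex.conj_mul']
  exact_mod_cast hv

theorem qform_kronecker_vecKronecker (A : Matrix ι ι ℂ) (B : Matrix κ κ ℂ) (u : ι → ℂ)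
    (v : κ → ℂ) : qform (A ⊗ₖ B) (vecKronecker u v) = qform A u * qform B v := by
  rw [qform, kronecker_mulVec_vecKronecker, star_vecKronecker,
    vecKronecker_dotProduct_vecKronecker, qform, qform]

theorem qform_mulVec_of_commute [DecidableEq ι] {E V : Matrix ι ι ℂ} (hV : Vᴴ * V = 1)
    (hEV : Commute E V) (u : ι → ℂ) : qform E (V *ᵥ u) = qform E u := by
  rw [qform, star_mulVec, mulVec_mulVec, ← dotProduct_mulVec, mulVec_mulVec, hEV.eq,
    ← mul_assoc, hV, one_mul, qform]

theorem qform_mexp_pos [DecidableEq ι] {H : Matrix ι ι ℂ} (hH : H.IsHermitian) (β : ℝ)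
    {v : ι → ℂ} (hv : v ≠ 0) : 0 < qform (mexp (-(β : ℂ) • H)) v := by
  have hβ : IsSelfAdjoint (-(β : ℂ)) := IsSelfAdjoint.neg (Complex.conj_ofReal β)
  rw [mexp_eq_exp]
  exact (posDef_exp (hH.smul hβ)).dotProduct_mulVec_pos hv

end Qform

theorem effPot_eq_add_of_qform_eq_mul {ι ι₁ ι₂ : Type*} [Fintype ι] [DecidableEq ι]
    [Fintype ι₁] [DecidableEq ι₁] [Fintype ι₂] [DecidableEq ι₂] {β : ℝ}
    {H : Matrix ι ι ℂ} {H₁ : Matrix ι₁ ι₁ ℂ} {H₂ : Matrix ι₂ ι₂ ℂ}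
    {v : ι → ℂ} {v₁ : ι₁ → ℂ} {v₂ : ι₂ → ℂ}
    (h₁ : 0 < qform (mexp (-(β : ℂ) • H₁)) v₁) (h₂ : 0 < qform (mexp (-(β : ℂ) • H₂)) v₂)
    (h : qform (mexp (-(β : ℂ) • H)) v =
      qform (mexp (-(β : ℂ) • H₁)) v₁ * qform (mexp (-(β : ℂ) • H₂)) v₂) :
    effPot β H v = effPot β H₁ v₁ + effPot β H₂ v₂ := by
  obtain ⟨hre₁, him₁⟩ := Complex.pos_iff.mp h₁
  obtain ⟨hre₂, him₂⟩ := Complex.pos_iff.mp h₂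
  rw [effPot, effPot, effPot, h, Complex.mul_re, ← him₁, zero_mul, sub_zero,
    Real.log_mul hre₁.ne' hre₂.ne', neg_add]

theorem stmt18_general {m a : ℕ} (HS : Matrix (Fin m) (Fin m) ℂ) (HA : Matrix (Fin a) (Fin a) ℂ)
    (hHS : HS.IsHermitian) (hHA : HA.IsHermitian)
    (Htot V : Matrix (Fin m × Fin a) (Fin m × Fin a) ℂ)
    (hHtot : Htot = Matrix.of fun x y =>
      HS x.1 y.1 * (if x.2 = y.2 then 1 else 0) + (if x.1 = y.1 then 1 else 0) * HA x.2 y.2)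
    (hV₂ : Vᴴ * V = 1)
    (hcomm : V * Htot = Htot * V)
    (ψ0 ψ1 : Fin m → ℂ) (e0 ω : Fin a → ℂ)
    (hψ1 : ∑ i, ‖ψ1 i‖ ^ 2 = 1)
    (he0n : ∑ j, ‖e0 j‖ ^ 2 = 1) (hωn : ∑ j, ‖ω j‖ ^ 2 = 1)
    (he0 : HA.mulVec e0 = 0)
    (hact : V.mulVec (fun x => ψ0 x.1 * e0 x.2) = fun x => ψ1 x.1 * ω x.2) :
    ∀ β : ℝ, effPot β HS ψ0 = effPot β HS ψ1 + effPot β HA ω := by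
  intro β
  set c : ℂ := -(β : ℂ)
  have hsplit : c • Htot = (c • HS) ⊗ₖ 1 + 1 ⊗ₖ (c • HA) := by
    ext ⟨i, k⟩ ⟨j, l⟩
    simp [hHtot, one_apply, mul_add]
  have hexp : mexp (c • Htot) = mexp (c • HS) ⊗ₖ mexp (c • HA) := by
    rw [mexp_eq_exp, mexp_eq_exp, mexp_eq_exp, hsplit, exp_kronecker_one_add_one_kronecker]
  have hcommV : Commute (mexp (c • Htot)) V := by
    rw [mexp_eq_exp]
    exact ((Commute.symm hcomm).smul_left c).exp_left
  have he0_fixed : mexp (c • HA) *ᵥ e0 = e0 := by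
    rw [mexp_eq_exp, exp_mulVec_eq_self (by rw [smul_mulVec, he0, smul_zero])]
  have hne_zero {n : ℕ} {v : Fin n → ℂ} (hv : ∑ i, ‖v i‖ ^ 2 = 1) : v ≠ 0 := by
    rintro rfl; simp at hv
  have hqe0 : qform (mexp (c • HA)) e0 = 1 := by
    rw [qform, he0_fixed, star_dotProduct_self_eq_one he0n]
  refine effPot_eq_add_of_qform_eq_mul (qform_mexp_pos hHS β (hne_zero hψ1))
    (qform_mexp_pos hHA β (hne_zero hωn)) ?_
  calc qform (mexp (c • HS)) ψ0
      = qform (mexp (c • Htot)) (vecKronecker ψ0 e0) := by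
        rw [hexp, qform_kronecker_vecKronecker, hqe0, mul_one]
    _ = qform (mexp (c • Htot)) (vecKronecker ψ1 ω) := by
        rw [← qform_mulVec_of_commute hV₂ hcommV]; exact congrArg _ hact
    _ = _ := by rw [hexp, qform_kronecker_vecKronecker]

/-- Coherent-work additivity of the effective potential: if an energy-conserving unitary `V`
(commuting with `H_S⊗1 + 1⊗H_A`) maps `|ψ₀⟩⊗|0⟩` to `|ψ₁⟩⊗|ω⟩`, with `|0⟩` a zero-energy
eigenstate of `H_A`, then `Λ(β,ψ₀) = Λ(β,ψ₁) + Λ(β,ω)` for all `β`. -/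
theorem stmt18 {m a : ℕ} (HS : Matrix (Fin m) (Fin m) ℂ) (HA : Matrix (Fin a) (Fin a) ℂ)
    (hHS : HS.IsHermitian) (hHA : HA.IsHermitian)
    (Htot V : Matrix (Fin m × Fin a) (Fin m × Fin a) ℂ)
    (hHtot : Htot = Matrix.of fun x y =>
      HS x.1 y.1 * (if x.2 = y.2 then 1 else 0) + (if x.1 = y.1 then 1 else 0) * HA x.2 y.2)
    (hV₁ : V * Vᴴ = 1) (hV₂ : Vᴴ * V = 1)
    (hcomm : V * Htot = Htot * V)
    (ψ0 ψ1 : Fin m → ℂ) (e0 ω : Fin a → ℂ)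
    (hψ0 : ∑ i, ‖ψ0 i‖ ^ 2 = 1) (hψ1 : ∑ i, ‖ψ1 i‖ ^ 2 = 1)
    (he0n : ∑ j, ‖e0 j‖ ^ 2 = 1) (hωn : ∑ j, ‖ω j‖ ^ 2 = 1)
    (he0 : HA.mulVec e0 = 0)
    (hact : V.mulVec (fun x => ψ0 x.1 * e0 x.2) = fun x => ψ1 x.1 * ω x.2) :
    ∀ β : ℝ, effPot β HS ψ0 = effPot β HS ψ1 + effPot β HA ω :=
  stmt18_general HS HA hHS hHA Htot V hHtot hV₂ hcomm ψ0 ψ1 e0 ω hψ1 he0n hωn he0 hact
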